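/- On the symbolic lattice L, the order ⊑ is characterized by the join: for all l₁, l₂ ∈ L, l₁ ⊑ l₂ if and only if l₁ ⊔ l₂ = l₂. -/

import Mathlib

inductive SymExpr (P U B F : Type*) where
  | bot : SymExpr P U B F
  | top : SymExpr P U B F
  | prim : P → SymExpr P U B F
  | unop : U → SymExpr P U B F → SymExpr P U B F
  | binop : B → SymExpr P U B F → SymExpr P U B F → SymExpr P U B F
  | fn : F → List (SymExpr P U B F) → SymExpr P U B F
  | phi : List (SymExpr P U B F) → SymExpr P U B F

namespace SymExpr

variable {P U B F : Type*}

/-- The partial order `⊑` on the symbolic lattice. -/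
inductive Le : SymExpr P U B F → SymExpr P U B F → Prop where
  | bot (l) : Le .bot l
  | top (l) : Le l .top
  | prim (p : P) : Le (.prim p) (.prim p)
  | unop {l l'} (u : U) : Le l l' → Le (.unop u l) (.unop u l')
  | binop {l₁ l₂ l₁' l₂'} (b : B) : Le l₁ l₁' → Le l₂ l₂' →
      Le (.binop b l₁ l₂) (.binop b l₁' l₂')
  | fn {ls ls'} (f : F) : List.Forall₂ Le ls ls' → Le (.fn f ls) (.fn f ls')
  | phi {ls ls'} : List.Forall₂ Le ls ls' → Le (.phi ls) (.phi ls')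

attribute [local instance] Classical.propDecidable

mutual
noncomputable def join : SymExpr P U B F → SymExpr P U B F → SymExpr P U B F
  | .bot, l => l
  | l, .bot => l
  | .prim p, .prim p' => if p = p' then .prim p else .top
  | .unop u l, .unop u' l' => if u = u' then .unop u (join l l') else .top
  | .binop b l₁ l₂, .binop b' l₁' l₂' =>
      if b = b' then .binop b (join l₁ l₁') (join l₂ l₂') else .top
  | .fn f ls, .fn f' ls' =>
      if f = f' ∧ ls.length = ls'.length then .fn f (joinList ls ls') else .top
  | .phi ls, .phi ls' =>
      if ls.length = ls'.length then .phi (joinList ls ls') else .top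
  | _, _ => .top

noncomputable def joinList : List (SymExpr P U B F) → List (SymExpr P U B F) → List (SymExpr P U B F)
  | l :: ls, l' :: ls' => join l l' :: joinList ls ls'
  | _, _ => []
end

mutual
noncomputable def meet : SymExpr P U B F → SymExpr P U B F → SymExpr P U B F
  | .top, l => l
  | l, .top => l
  | .prim p, .prim p' => if p = p' then .prim p else .bot
  | .unop u l, .unop u' l' => if u = u' then .unop u (meet l l') else .bot
  | .binop b l₁ l₂, .binop b' l₁' l₂' =>
      if b = b' then .binop b (meet l₁ l₁') (meet l₂ l₂') else .bot
  | .fn f ls, .fn f' ls' =>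
      if f = f' ∧ ls.length = ls'.length then .fn f (meetList ls ls') else .bot
  | .phi ls, .phi ls' =>
      if ls.length = ls'.length then .phi (meetList ls ls') else .bot
  | _, _ => .bot

noncomputable def meetList : List (SymExpr P U B F) → List (SymExpr P U B F) → List (SymExpr P U B F)
  | l :: ls, l' :: ls' => meet l l' :: meetList ls ls'
  | _, _ => []
end

mutual
def depth : SymExpr P U B F → ℕ
  | .bot => 0
  | .top => 0
  | .prim _ => 0
  | .unop _ l => 1 + depth l
  | .binop _ l₁ l₂ => 1 + max (depth l₁) (depth l₂)
  | .fn _ ls => 1 + depthList ls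
  | .phi ls => 1 + depthList ls

def depthList : List (SymExpr P U B F) → ℕ
  | [] => 0
  | l :: ls => max (depth l) (depthList ls)
end

/-- The widening truncation `T_i`. -/
def trunc : ℕ → SymExpr P U B F → SymExpr P U B F
  | _, .bot => .bot
  | _, .top => .top
  | _, .prim p => .prim p
  | 0, .unop _ _ => .top
  | 0, .binop _ _ _ => .top
  | 0, .fn _ _ => .top
  | 0, .phi _ => .top
  | i + 1, .unop u l => .unop u (trunc i l)
  | i + 1, .binop b l₁ l₂ => .binop b (trunc i l₁) (trunc i l₂)
  | i + 1, .fn f ls => .fn f (ls.map (fun l => trunc i l))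
  | i + 1, .phi ls => .phi (ls.map (fun l => trunc i l))

end SymExpr

/-!
A join is an upper bound of its left argument, so `l₁ ⊔ l₂ = l₂` gives `l₁ ⊑ l₂`. Conversely,
induction on a derivation of `l₁ ⊑ l₂` shows that joining with a larger element returns it; the
base cases are `⊥ ⊔ l = l` and `l ⊔ ⊤ = ⊤`.
-/

namespace SymExpr

variable {P U B F : Type*}

mutual
theorem Le.refl : ∀ l : SymExpr P U B F, Le l l
  | .bot => .bot _
  | .top => .top _
  | .prim p => .prim p
  | .unop u l => .unop u (Le.refl l)
  | .binop b l₁ l₂ => .binop b (Le.refl l₁) (Le.refl l₂)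
  | .fn f ls => .fn f (forall₂_le_refl ls)
  | .phi ls => .phi (forall₂_le_refl ls)

theorem forall₂_le_refl : ∀ ls : List (SymExpr P U B F), List.Forall₂ Le ls ls
  | [] => .nil
  | l :: ls => .cons (Le.refl l) (forall₂_le_refl ls)
end

@[simp]
theorem join_bot (l : SymExpr P U B F) : join l .bot = l := by
  cases l <;> rfl

theorem join_top (l : SymExpr P U B F) : join l .top = .top := by
  cases l <;> simp [join]

theorem le_join_left (l₁ l₂ : SymExpr P U B F) : Le l₁ (join l₁ l₂) := by
  induction l₁, l₂ using join.induct
    (motive_2 := fun ls ls' => ls.length = ls'.length → List.Forall₂ Le ls (joinList ls ls')) with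
  | case1 l => exact .bot l
  | case2 l _ => simpa using Le.refl l
  | case3 p => simpa [join] using Le.prim p
  | case5 _ u _ ih => simpa [join] using ih.unop u
  | case7 _ _ b _ _ ih₁ ih₂ => simpa [join] using ih₁.binop b ih₂
  | case9 f _ _ _ h ih =>
    obtain ⟨rfl, hlen⟩ := h
    simpa [join, hlen] using Le.fn f (ih hlen)
  | case11 _ _ hlen ih => simpa [join, hlen] using Le.phi (ih hlen)
  | case4 _ _ h | case6 _ _ _ _ h | case8 _ _ _ _ _ _ h | case10 _ _ _ _ h | case12 _ _ h =>
    rw [join, if_neg h]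
    exact .top _
  | case13 t x _ _ _ _ _ _ _ =>
    -- the heads of `t` and `x` differ or one of them is `⊤`, so the join is `⊤`
    cases t <;> cases x <;> first | (exfalso; solve_by_elim) | (simp only [join]; exact .top _)
  | case14 _ _ _ _ ih ihs hlen => exact .cons ih (ihs (by simpa using hlen))
  | case15 t x hcons hlen =>
    cases t <;> cases x
    · exact .nil
    · simp at hlen
    · simp at hlen
    · exact (hcons _ _ _ _ rfl rfl).elim

mutual
theorem join_eq_of_le : ∀ {l₁ l₂ : SymExpr P U B F}, Le l₁ l₂ → join l₁ l₂ = l₂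
  | _, _, .bot _ => rfl
  | _, _, .top l => join_top l
  | _, _, .prim _ => by simp [join]
  | _, _, .unop _ h => by simp [join, join_eq_of_le h]
  | _, _, .binop _ h₁ h₂ => by simp [join, join_eq_of_le h₁, join_eq_of_le h₂]
  | _, _, .fn _ hs => by simp [join, hs.length_eq, joinList_eq_of_forall₂ hs]
  | _, _, .phi hs => by simp [join, hs.length_eq, joinList_eq_of_forall₂ hs]

theorem joinList_eq_of_forall₂ :
    ∀ {ls ls' : List (SymExpr P U B F)}, List.Forall₂ Le ls ls' → joinList ls ls' = ls'
  | _, _, .nil => rfl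
  | _, _, .cons h hs => by simp [joinList, join_eq_of_le h, joinList_eq_of_forall₂ hs]
end

end SymExpr

/-- the order is characterized by the join: `l₁ ⊑ l₂ ↔ l₁ ⊔ l₂ = l₂`. -/
theorem SymExpr.le_iff_join_eq {P U B F : Type*} (l₁ l₂ : SymExpr P U B F) :
    l₁.Le l₂ ↔ l₁.join l₂ = l₂ :=
  ⟨join_eq_of_le, fun h => h ▸ le_join_left l₁ l₂⟩
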